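/- arXiv:math/0512546 — 11 statements merged into one kernel-verified Lean document; each statement's English description precedes it below -/
import Mathlib

section
/- There exists a decreasing sequence ⟨f_n : n ∈ ℕ⟩ of functions from [0,1] to ℝ (i.e. f_{n+1}(x) ≤ f_n(x) for all n and x) converging pointwise to 0 such that every subset A ⊆ [0,1] on which ⟨f_n⟩ converges uniformly to 0 has Lebesgue inner measure zero. -/
/-!
Choose a representative of every coset `x + ℚ` (a Vitali set) and let `q x ∈ ℚ` be the offset
of `x` from its representative, so that `x - y = q x - q y` whenever `x - y` is rational.
The functions `f n = 1_{n ≤ encode (q x)}` decrease pointwise to `0`, and uniform convergence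
on `A` confines `q` to a finite set `F` on `A`. If a measurable `T ⊆ A` had positive measure,
then by Steinhaus `T - T` would be a neighbourhood of `0` and so contain infinitely many
rationals, all lying in the finite set `F - F`. Hence every measurable subset of `A` is null,
i.e. `A` has inner measure zero.
-/

open MeasureTheory Filter Set Pointwise Topology

noncomputable section

def ratCastSubgroup : AddSubgroup ℝ := (Rat.castHom ℝ).toAddMonoidHom.range

def ratRep (x : ℝ) : ℝ := (QuotientAddGroup.mk x : ℝ ⧸ ratCastSubgroup).out

theorem exists_ratCast_eq_sub_ratRep (x : ℝ) : ∃ a : ℚ, (a : ℝ) = x - ratRep x := by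
  have h : -ratRep x + x ∈ ratCastSubgroup :=
    QuotientAddGroup.eq.mp <|
      QuotientAddGroup.out_eq' (QuotientAddGroup.mk x : ℝ ⧸ ratCastSubgroup)
  obtain ⟨a, ha⟩ := h
  exact ⟨a, by simpa [sub_eq_neg_add] using ha⟩

theorem ratRep_eq_of_sub_eq_ratCast {x y : ℝ} {c : ℚ} (h : x - y = c) :
    ratRep x = ratRep y := by
  suffices (QuotientAddGroup.mk x : ℝ ⧸ ratCastSubgroup) = QuotientAddGroup.mk y by
    rw [ratRep, this, ratRep]
  refine QuotientAddGroup.eq.mpr ⟨-c, ?_⟩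
  change ((-c : ℚ) : ℝ) = -x + y
  push_cast
  linarith

def ratOffset (x : ℝ) : ℚ := (exists_ratCast_eq_sub_ratRep x).choose

theorem ratOffset_sub_ratOffset {x y : ℝ} {c : ℚ} (h : x - y = c) :
    ratOffset x - ratOffset y = c := by
  have hx : (ratOffset x : ℝ) = x - ratRep x :=
    (exists_ratCast_eq_sub_ratRep x).choose_spec
  have hy : (ratOffset y : ℝ) = y - ratRep y :=
    (exists_ratCast_eq_sub_ratRep y).choose_spec
  have hrep := ratRep_eq_of_sub_eq_ratCast h
  exact_mod_cast show ((ratOffset x - ratOffset y : ℚ) : ℝ) = c by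
    push_cast [hx, hy, hrep]; linarith

theorem infinite_inter_range_ratCast_of_mem_nhds {s : Set ℝ} {x : ℚ}
    (hs : s ∈ 𝓝 (x : ℝ)) :
    (s ∩ range ((↑) : ℚ → ℝ)).Infinite := by
  have hpre : (↑) ⁻¹' s ∈ 𝓝 x :=
    Rat.continuous_coe_real.continuousAt.preimage_mem_nhds hs
  refine ((infinite_of_mem_nhds x hpre).image Rat.cast_injective.injOn).mono ?_
  rintro _ ⟨a, ha, rfl⟩
  exact ⟨ha, a, rfl⟩

theorem measure_eq_zero_of_ratOffset_mem_finite (μ : Measure ℝ) [μ.IsAddHaarMeasure]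
    {T : Set ℝ} (hT : MeasurableSet T) {F : Set ℚ} (hF : F.Finite)
    (hTF : ∀ x ∈ T, ratOffset x ∈ F) : μ T = 0 := by
  by_contra hne
  have hsteinhaus : T - T ∈ 𝓝 ((0 : ℚ) : ℝ) := by
    simpa using Measure.sub_mem_nhds_zero_of_addHaar_pos μ T hT (pos_iff_ne_zero.mpr hne)
  refine infinite_inter_range_ratCast_of_mem_nhds hsteinhaus (((hF.sub hF).image (↑)).subset ?_)
  rintro _ ⟨⟨x, hx, y, hy, hxy⟩, c, rfl⟩
  exact ⟨c, ⟨_, hTF x hx, _, hTF y hy, ratOffset_sub_ratOffset hxy⟩, rfl⟩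

theorem measure_diff_eq_of_forall_measurableSet_subset {α : Type*} [MeasurableSpace α]
    {μ : Measure α} {s A : Set α} (hs : MeasurableSet s)
    (hA : ∀ T ⊆ A, MeasurableSet T → μ T = 0) : μ (s \ A) = μ s := by
  refine le_antisymm (measure_mono sdiff_subset) ?_
  obtain ⟨M, hM, hMmeas, hMeq⟩ := exists_measurable_superset μ (s \ A)
  have hnull : μ (s \ M) = 0 :=
    hA _ (fun x hx => by_contra fun hxA => hx.2 (hM ⟨hx.1, hxA⟩)) (hs.diff hMmeas)
  calc μ s ≤ μ (M ∪ s \ M) := measure_mono (fun x hx => by by_cases x ∈ M <;> simp [*])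
    _ ≤ μ M + μ (s \ M) := measure_union_le _ _
    _ = μ (s \ A) := by rw [hnull, add_zero, hMeq]

section Tail

variable {α : Type*} (k : α → ℕ)

def tailIndicator (n : ℕ) : α → ℝ := {x | n ≤ k x}.indicator (1 : α → ℝ)

theorem tailIndicator_succ_le (n : ℕ) (x : α) :
    tailIndicator k (n + 1) x ≤ tailIndicator k n x :=
  indicator_le_indicator_of_subset (fun _ h => Nat.le_of_succ_le h) (fun _ => zero_le_one) x

theorem tendsto_tailIndicator (x : α) : Tendsto (fun n => tailIndicator k n x) atTop (𝓝 0) := by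
  refine tendsto_const_nhds.congr' ?_
  filter_upwards [eventually_gt_atTop (k x)] with n hn
  exact (indicator_of_notMem (show x ∉ {x | n ≤ k x} from not_le.mpr hn) _).symm

theorem exists_lt_of_tendstoUniformlyOn_tailIndicator {A : Set α}
    (h : TendstoUniformlyOn (tailIndicator k) 0 atTop A) : ∃ N, ∀ x ∈ A, k x < N := by
  obtain ⟨N, hN⟩ := (Metric.tendstoUniformlyOn_iff.mp h 1 one_pos).exists
  refine ⟨N, fun x hx => not_le.mp fun hNx => (hN x hx).ne ?_⟩
  simp [tailIndicator, indicator_of_mem (show x ∈ {x | N ≤ k x} from hNx)]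

end Tail

end

/-- There is a decreasing sequence of functions `[0,1] → ℝ` converging
pointwise to `0` such that every subset `A ⊆ [0,1]` on which the sequence converges
uniformly to `0` has Lebesgue inner measure zero, i.e. `μ*([0,1] \ A) = 1`. -/
theorem stmt0 :
    ∃ f : ℕ → ℝ → ℝ,
      (∀ x ∈ Set.Icc (0:ℝ) 1, ∀ n : ℕ, f (n + 1) x ≤ f n x) ∧
      (∀ x ∈ Set.Icc (0:ℝ) 1, Tendsto (fun n => f n x) atTop (nhds 0)) ∧
      (∀ A ⊆ Set.Icc (0:ℝ) 1,
        TendstoUniformlyOn f 0 atTop A → volume (Set.Icc (0:ℝ) 1 \ A) = 1) := by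
  set k : ℝ → ℕ := fun x => Encodable.encode (ratOffset x)
  refine ⟨tailIndicator k, fun x _ n => tailIndicator_succ_le k n x,
    fun x _ => tendsto_tailIndicator k x, fun A _ hA => ?_⟩
  obtain ⟨N, hN⟩ := exists_lt_of_tendstoUniformlyOn_tailIndicator k hA
  have hfin : {a : ℚ | Encodable.encode a < N}.Finite :=
    (finite_Iio N).preimage Encodable.encode_injective.injOn
  have hnull : ∀ T ⊆ A, MeasurableSet T → volume T = 0 := fun T hTA hT =>
    measure_eq_zero_of_ratOffset_mem_finite volume hT hfin fun x hx => hN x (hTA hx)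
  rw [measure_diff_eq_of_forall_measurableSet_subset measurableSet_Icc hnull, Real.volume_Icc]
  simp
end

section
/- There exists a partition of [0,1] into countably many pairwise disjoint sets ⟨B_n : n ∈ ℕ⟩ such that each B_n has full Lebesgue outer measure, i.e. μ*(B_n) = 1 for every n. -/
/-!
Take a `ℚ`-linear functional `f : ℝ → ℚ` with `f 1 = 0` that is onto (it exists because `1` and
`√2` are `ℚ`-independent), and let `B_q = f⁻¹{q} ∩ [0, 1]`. Since `f` kills `ℤ`, the fibres of `f`
descend to the circle `ℝ/ℤ`; there they are invariant under the dense group of rational rotations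
and are rotations of one another. A measurable hull of a fibre is then a.e. invariant under a dense
set of rotations, so by ergodicity it is null or conull; it cannot be null since countably many
rotated copies of the fibre cover the circle. Hence every fibre has outer measure `1` on the circle,
and so does its trace on `(0, 1]`.
-/

open MeasureTheory Set Function Filter
open scoped Pointwise

section Ergodic

variable {G X : Type*} [AddGroup G] [AddAction G X] [MeasurableSpace X] [MeasurableConstVAdd G X]
  {μ : Measure X} {s : Set X}

theorem vadd_toMeasurable_ae_eq [VAddInvariantMeasure G X μ] (hμs : μ s ≠ ⊤) {g : G}
    (hg : g +ᵥ s = s) : g +ᵥ toMeasurable μ s =ᵐ[μ] toMeasurable μ s := by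
  set E := toMeasurable μ s
  have hsub : s ⊆ E ∩ (g +ᵥ E) :=
    subset_inter (subset_toMeasurable μ s) (hg ▸ vadd_set_mono (subset_toMeasurable μ s))
  have hmeas : NullMeasurableSet (E ∩ (g +ᵥ E)) μ :=
    ((measurableSet_toMeasurable μ s).inter
      ((measurableSet_toMeasurable μ s).const_vadd g)).nullMeasurableSet
  -- both `E` and `g +ᵥ E` are measurable hulls of `s`, hence a.e. equal to their intersection
  have hull {t : Set X} (hst : E ∩ (g +ᵥ E) ⊆ t) (ht : μ t = μ s) :
      (E ∩ (g +ᵥ E) : Set X) =ᵐ[μ] t :=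
    ae_eq_of_subset_of_measure_ge hst (by rw [ht]; exact measure_mono hsub) hmeas (by rwa [ht])
  exact (hull inter_subset_right (by rw [measure_vadd, measure_toMeasurable])).symm.trans
    (hull inter_subset_left (measure_toMeasurable s))

variable [TopologicalSpace G] [ContinuousNeg G] [TopologicalSpace X] [R1Space X] [BorelSpace X]
  [ContinuousVAdd G X] [IsFiniteMeasure μ] [μ.InnerRegular] [ErgodicVAdd G X μ]

theorem measure_eq_zero_or_eq_measure_univ_of_dense_vadd_eq {H : Set G} (hH : Dense H)
    (hs : ∀ g ∈ H, g +ᵥ s = s) : μ s = 0 ∨ μ s = μ univ := by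
  have hconst : EventuallyConst (toMeasurable μ s) (ae μ) :=
    aeconst_of_dense_aestabilizer_vadd (measurableSet_toMeasurable μ s).nullMeasurableSet <|
      hH.mono fun g hg ↦ AddAction.mem_aestabilizer.2 <|
        vadd_toMeasurable_ae_eq (measure_ne_top μ s) (hs g hg)
  rw [← measure_toMeasurable s]
  rcases eventuallyConst_set'.1 hconst with h | h
  · exact .inl (by rw [measure_congr h, measure_empty])
  · exact .inr (measure_congr h)

end Ergodic

section Fiber

variable {G A : Type*} [AddGroup G] [AddGroup A]

theorem AddMonoidHom.vadd_preimage_singleton (φ : G →+ A) (g : G) (a : A) :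
    g +ᵥ φ ⁻¹' {a} = φ ⁻¹' {φ g + a} := by
  ext x
  simp [mem_vadd_set_iff_neg_vadd_mem, neg_add_eq_iff_eq_add]

variable [TopologicalSpace G] [ContinuousNeg G] [ContinuousAdd G] [R1Space G] [MeasurableSpace G]
  [BorelSpace G] {μ : Measure G} [IsFiniteMeasure μ] [μ.InnerRegular] [ErgodicVAdd G G μ]

theorem AddMonoidHom.measure_preimage_singleton_eq_measure_univ [Countable A] {φ : G →+ A}
    (hφ : Surjective φ) (hker : Dense (φ.ker : Set G)) (a : A) : μ (φ ⁻¹' {a}) = μ univ := by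
  rcases measure_eq_zero_or_eq_measure_univ_of_dense_vadd_eq (μ := μ) (s := φ ⁻¹' {a}) hker
      fun g hg ↦ by
    rw [vadd_preimage_singleton, φ.mem_ker.1 hg, zero_add] with h | h
  · choose g hg using fun b ↦ hφ (b - a)
    have hcover : univ ⊆ ⋃ b, g b +ᵥ φ ⁻¹' {a} := fun x _ ↦
      mem_iUnion.2 ⟨φ x, by simp [vadd_preimage_singleton, hg]⟩
    rw [h, eq_comm, ← nonpos_iff_eq_zero]
    calc μ univ ≤ μ (⋃ b, g b +ᵥ φ ⁻¹' {a}) := measure_mono hcover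
      _ = 0 := measure_iUnion_null fun b ↦ by rw [measure_vadd, h]
  · exact h

end Fiber

theorem AddCircle.volume_Ioc_inter_preimage_coe (T : ℝ) [Fact (0 < T)] (a : ℝ)
    (C : Set (AddCircle T)) : volume (Ioc a (a + T) ∩ (↑) ⁻¹' C) = volume C := by
  let e := AddCircle.measurableEquivIoc T a
  have he : MeasurePreserving e.symm (Measure.comap Subtype.val volume) volume :=
    (AddCircle.measurePreserving_equivIoc T).symm e
  rw [← he.measure_preimage_equiv, comap_subtype_coe_apply measurableSet_Ioc]
  congr 1
  ext x
  constructor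
  · rintro ⟨hx, hxC⟩
    exact ⟨⟨x, hx⟩, hxC, rfl⟩
  · rintro ⟨y, hy, rfl⟩
    exact ⟨y.2, hy⟩

theorem Module.exists_dual_surjective_map_eq_zero {K V : Type*} [Field K] [AddCommGroup V]
    [Module K V] {v w : V} (hw : w ∉ K ∙ v) : ∃ f : Module.Dual K V, f v = 0 ∧ Surjective f := by
  obtain ⟨f, hfw, hf⟩ := Submodule.exists_dual_map_eq_bot_of_notMem hw inferInstance
  refine ⟨f, ?_, LinearMap.surjective_of_ne_zero fun h ↦ hfw (by simp [h])⟩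
  exact LinearMap.le_ker_iff_map.2 hf (Submodule.mem_span_singleton_self v)

theorem sqrt_two_notMem_span_one : √2 ∉ ℚ ∙ (1 : ℝ) := fun h ↦ by
  obtain ⟨q, hq⟩ := Submodule.mem_span_singleton.1 h
  exact irrational_sqrt_two ⟨q, by rw [← hq, Rat.smul_one_eq_cast]⟩

theorem denseRange_ratCast_unitAddCircle : DenseRange fun q : ℚ ↦ ((q : ℝ) : UnitAddCircle) :=
  (QuotientAddGroup.mk'_surjective _).denseRange.comp Rat.denseRange_cast
    (AddCircle.continuous_mk' 1)

theorem LinearMap.volume_preimage_singleton_inter_Icc {f : ℝ →ₗ[ℚ] ℚ} (hf1 : f 1 = 0)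
    (hf : Surjective f) (q : ℚ) : volume (f ⁻¹' {q} ∩ Icc 0 1) = 1 := by
  have hf_ratCast (r : ℚ) : f r = 0 := by rw [← Rat.smul_one_eq_cast, map_smul, hf1, smul_zero]
  let φ : UnitAddCircle →+ ℚ := QuotientAddGroup.lift _ f.toAddMonoidHom
    (AddSubgroup.zmultiples_le.2 hf1)
  have hφ : Surjective φ := fun r ↦ (hf r).imp' ((↑) : ℝ → UnitAddCircle) fun _ hx ↦ hx
  have hker : Dense (φ.ker : Set UnitAddCircle) :=
    denseRange_ratCast_unitAddCircle.mono <| range_subset_iff.2 hf_ratCast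
  have hfiber : volume (φ ⁻¹' {q}) = 1 := by
    rw [φ.measure_preimage_singleton_eq_measure_univ hφ hker, AddCircle.measure_univ]
    simp
  refine le_antisymm ?_ ?_
  · calc volume (f ⁻¹' {q} ∩ Icc 0 1) ≤ volume (Icc (0 : ℝ) 1) := measure_mono inter_subset_right
      _ = 1 := by simp
  · calc 1 = volume (Ioc (0 : ℝ) (0 + 1) ∩ ((↑) : ℝ → UnitAddCircle) ⁻¹' (φ ⁻¹' {q})) := by
          rw [AddCircle.volume_Ioc_inter_preimage_coe, hfiber]
      _ ≤ volume (f ⁻¹' {q} ∩ Icc 0 1) := by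
          rw [inter_comm, zero_add]
          exact measure_mono (inter_subset_inter_right _ Ioc_subset_Icc_self)

/-- There is a partition of `[0,1]` into countably many pairwise disjoint
nonempty sets, each of full Lebesgue outer measure. -/
theorem stmt1 :
    ∃ B : ℕ → Set ℝ,
      (∀ n, (B n).Nonempty) ∧
      Pairwise (Function.onFun Disjoint B) ∧
      (⋃ n, B n) = Set.Icc (0:ℝ) 1 ∧
      (∀ n, volume (B n) = 1) := by
  obtain ⟨f, hf1, hf⟩ := Module.exists_dual_surjective_map_eq_zero sqrt_two_notMem_span_one
  have hB := f.volume_preimage_singleton_inter_Icc hf1 hf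
  let e : ℕ ≃ ℚ := (Denumerable.eqv ℚ).symm
  refine ⟨fun n ↦ f ⁻¹' {e n} ∩ Icc 0 1,
    fun n ↦ nonempty_of_measure_ne_zero (μ := volume) (by simp [hB]), fun m n hmn ↦ ?_, ?_,
    fun n ↦ hB (e n)⟩
  · exact ((disjoint_singleton.2 (e.injective.ne hmn)).preimage f).mono inter_subset_left
      inter_subset_left
  · rw [← iUnion_inter, ← preimage_iUnion, e.surjective.iUnion_comp fun q ↦ ({q} : Set ℚ),
      iUnion_singleton_eq_range, range_id', preimage_univ, univ_inter]
end

section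
/- For every nondecreasing sequence of natural numbers α ∈ ℕ → ℕ there exists a sequence a = ⟨a_n⟩ of real numbers converging to 0 whose order of convergence equals α, i.e. oc(a) = α. -/
open Filter Set

/-- The order of convergence to `0` of a real sequence, relative to `ε_n = 2⁻ⁿ`:
`(oc a) n` is the least `m` such that `|a l| ≤ 2⁻ⁿ` for all `l ≥ m`. -/
noncomputable def oc (a : ℕ → ℝ) : ℕ → ℕ :=
  fun n => sInf {m | ∀ l ≥ m, |a l| ≤ (1 / 2 : ℝ) ^ n}

/-- For every nondecreasing `α : ℕ → ℕ` there is a real sequence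
converging to `0` whose order of convergence is exactly `α`. -/
theorem stmt3 (α : ℕ → ℕ) (hα : Monotone α) :
    ∃ a : ℕ → ℝ, Tendsto a atTop (nhds 0) ∧ oc a = α := by
  set S : ℕ → Set ℝ := fun l => insert 2 {x | ∃ k, α k ≤ l ∧ x = (1 / 2 : ℝ) ^ k} with hS
  set a : ℕ → ℝ := fun l => sInf (S l) with ha
  have hne : ∀ l, (S l).Nonempty := fun l => ⟨2, Or.inl rfl⟩
  have hbdd : ∀ l, BddBelow (S l) := by
    intro l
    refine ⟨0, fun x hx => ?_⟩
    rcases hx with h | ⟨k, _, rfl⟩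
    · rw [h]; norm_num
    · positivity
  have h0 : ∀ l, 0 ≤ a l := by
    intro l
    refine le_csInf (hne l) fun x hx => ?_
    rcases hx with h | ⟨k, _, rfl⟩
    · rw [h]; norm_num
    · positivity
  have hub : ∀ n l, α n ≤ l → a l ≤ (1 / 2 : ℝ) ^ n := by
    intro n l hl
    exact csInf_le (hbdd l) (Or.inr ⟨n, hl, rfl⟩)
  have hlb : ∀ n l, l < α n → 2 * (1 / 2 : ℝ) ^ n ≤ a l := by
    intro n l hl
    refine le_csInf (hne l) fun x hx => ?_
    rcases hx with h | ⟨k, hk, rfl⟩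
    · rw [h]
      have : (1 / 2 : ℝ) ^ n ≤ 1 := by
        apply pow_le_one₀ <;> norm_num
      linarith
    · have hkn : k < n := by
        by_contra h
        push_neg at h
        exact absurd (le_trans (hα h) hk) (not_le.mpr hl)
      have : (1 / 2 : ℝ) ^ n ≤ (1 / 2 : ℝ) ^ (k + 1) := by
        apply pow_le_pow_of_le_one <;> [norm_num; norm_num; omega]
      calc 2 * (1 / 2 : ℝ) ^ n ≤ 2 * (1 / 2 : ℝ) ^ (k + 1) := by linarith
        _ = (1 / 2 : ℝ) ^ k := by ring
  refine ⟨a, ?_, ?_⟩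
  · rw [Metric.tendsto_atTop]
    intro ε hε
    obtain ⟨n, hn⟩ := exists_pow_lt_of_lt_one hε (by norm_num : (1 / 2 : ℝ) < 1)
    refine ⟨α n, fun l hl => ?_⟩
    rw [Real.dist_eq, sub_zero, abs_of_nonneg (h0 l)]
    exact lt_of_le_of_lt (hub n l hl) hn
  · funext n
    have hpos : (0 : ℝ) < (1 / 2 : ℝ) ^ n := by positivity
    apply le_antisymm
    · apply Nat.sInf_le
      intro l hl
      rw [abs_of_nonneg (h0 l)]
      exact hub n l hl
    · by_contra h
      push_neg at h
      have hmem : oc a n ∈ {m | ∀ l ≥ m, |a l| ≤ (1 / 2 : ℝ) ^ n} := by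
        apply Nat.sInf_mem
        exact ⟨α n, fun l hl => by rw [abs_of_nonneg (h0 l)]; exact hub n l hl⟩
      have hl1 : α n - 1 ≥ oc a n := by omega
      have := hmem (α n - 1) hl1
      rw [abs_of_nonneg (h0 _)] at this
      have := hlb n (α n - 1) (by omega)
      linarith
end

section
/- Let X be a set. For every function φ : X → (ℕ → ℕ) taking values in the nondecreasing sequences of natural numbers there exists a sequence F = ⟨F_n : n ∈ ℕ⟩ of real-valued functions on X converging pointwise to 0 such that oc F = φ. -/
open Filter Set

/-- For every `φ : X → (ℕ → ℕ)` taking values in the nondecreasing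
sequences, there is a sequence `F` of real-valued functions on `X` converging pointwise
to `0` with `oc F = φ`. -/
theorem stmt4 {X : Type*} (φ : X → ℕ → ℕ) (hφ : ∀ x, Monotone (φ x)) :
    ∃ F : ℕ → X → ℝ,
      (∀ x, Tendsto (fun n => F n x) atTop (nhds 0)) ∧
      (∀ x, oc (fun n => F n x) = φ x) := by
  classical
  set F : ℕ → X → ℝ := fun l x =>
    if ∀ k, φ x k ≤ l then 0
    else if ∃ k, φ x k ≤ l then (1 / 2 : ℝ) ^ sSup {k | φ x k ≤ l} else 2 with hF
  have key : ∀ x l n, |F l x| ≤ (1 / 2 : ℝ) ^ n ↔ φ x n ≤ l := by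
    intro x l n
    by_cases hall : ∀ k, φ x k ≤ l
    · simp only [hF, if_pos hall, abs_zero]
      constructor
      · intro _; exact hall n
      · intro _; positivity
    · by_cases hex : ∃ k, φ x k ≤ l
      · simp only [hF, if_neg hall, if_pos hex]
        obtain ⟨k0, hk0⟩ := not_forall.mp hall
        have hbdd : BddAbove {k | φ x k ≤ l} := by
          refine ⟨k0, fun j hj => ?_⟩
          by_contra hjk
          exact hk0 (le_trans (hφ x (le_of_not_ge hjk)) hj)
        set M := sSup {k | φ x k ≤ l} with hM
        have hMmem : M ∈ {k | φ x k ≤ l} := Nat.sSup_mem hex hbdd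
        have habs : |(1 / 2 : ℝ) ^ M| = (1 / 2 : ℝ) ^ M := by
          rw [abs_of_pos]; positivity
        rw [habs]
        have hpow : (1 / 2 : ℝ) ^ M ≤ (1 / 2 : ℝ) ^ n ↔ n ≤ M := by
          rw [← not_lt, ← not_lt, not_iff_not]
          exact pow_lt_pow_iff_right_of_lt_one₀ (by norm_num) (by norm_num)
        rw [hpow]
        constructor
        · intro hnM; exact le_trans (hφ x hnM) hMmem
        · intro hn; exact le_csSup hbdd hn
      · simp only [hF, if_neg hall, if_neg hex]
        push_neg at hex
        constructor
        · intro h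
          exfalso
          have h1 : (1 / 2 : ℝ) ^ n ≤ 1 := pow_le_one₀ (by norm_num) (by norm_num)
          rw [abs_of_pos (by norm_num : (0:ℝ) < 2)] at h
          linarith
        · intro h; exact absurd h (not_le.mpr (hex n))
  refine ⟨F, ?_, ?_⟩
  · intro x
    rw [Metric.tendsto_atTop]
    intro ε hε
    obtain ⟨n, hn⟩ := exists_pow_lt_of_lt_one hε (by norm_num : (1/2 : ℝ) < 1)
    refine ⟨φ x n, fun l hl => ?_⟩
    rw [Real.dist_eq, sub_zero]
    exact lt_of_le_of_lt ((key x l n).mpr hl) hn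
  · intro x
    funext n
    show sInf {m | ∀ l ≥ m, |F l x| ≤ (1 / 2 : ℝ) ^ n} = φ x n
    have hset : {m | ∀ l ≥ m, |F l x| ≤ (1 / 2 : ℝ) ^ n} = Ici (φ x n) := by
      ext m
      constructor
      · intro h; exact (key x m n).mp (h m le_rfl)
      · intro h l hl; exact (key x l n).mpr (le_trans h hl)
    rw [hset, csInf_Ici]
end

section
/- Let μ* be an upward continuous outer measure on a set X and let F be a sequence of real-valued functions on X converging pointwise to 0. Then GES(X, μ*, F) holds if and only if there exists a subset Y ⊆ X of full outer measure (μ*(Y) = μ*(X)) such that oc F[Y] ∈ K_σ. -/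
open MeasureTheory Filter Set

/-- A set of sequences is bounded in the everywhere-domination order. -/
def PwBounded (B : Set (ℕ → ℕ)) : Prop := ∃ β : ℕ → ℕ, ∀ α ∈ B, ∀ n, α n ≤ β n

/-- The σ-ideal `K_σ` generated by the `≤`-bounded subsets of `ℕ → ℕ`. -/
def Ksigma : Set (Set (ℕ → ℕ)) :=
  {A | ∃ B : ℕ → Set (ℕ → ℕ), (∀ n, PwBounded (B n)) ∧ A ⊆ ⋃ n, B n}

/-- `μ` is an upward continuous outer measure. -/
def UpCont {X : Type*} (μ : OuterMeasure X) : Prop :=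
  ∀ A : ℕ → Set X,
    Tendsto (fun n => μ (⋃ k < n, A k)) atTop (nhds (μ (⋃ n, A n)))

/-- `GES(X, μ*, F)`: for each `M < μ*(X)` there is `A ⊆ X` with `μ*(A) > M` on which
`F` converges uniformly to `0`. -/
def GESF {X : Type*} (μ : OuterMeasure X) (F : ℕ → X → ℝ) : Prop :=
  ∀ M < μ Set.univ, ∃ A : Set X, M < μ A ∧ TendstoUniformlyOn F 0 atTop A

open Topology in
lemma oc_set_nonempty {a : ℕ → ℝ} (ha : Tendsto a atTop (nhds 0)) (n : ℕ) :
    {m | ∀ l ≥ m, |a l| ≤ (1 / 2 : ℝ) ^ n}.Nonempty := by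
  have hpos : (0:ℝ) < (1/2:ℝ)^n := by positivity
  obtain ⟨N, hN⟩ := (Metric.tendsto_atTop.1 ha) _ hpos
  exact ⟨N, fun l hl => by simpa [Real.dist_eq] using (hN l hl).le⟩

lemma oc_spec {a : ℕ → ℝ} (ha : Tendsto a atTop (nhds 0)) (n : ℕ) :
    ∀ l ≥ oc a n, |a l| ≤ (1 / 2 : ℝ) ^ n :=
  Nat.sInf_mem (oc_set_nonempty ha n)

lemma oc_le {a : ℕ → ℝ} {n m : ℕ} (h : ∀ l ≥ m, |a l| ≤ (1 / 2 : ℝ) ^ n) :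
    oc a n ≤ m := Nat.sInf_le h

/-- Uniform convergence implies the image under `oc` is bounded. -/
lemma pwBounded_of_unif {X : Type*} {F : ℕ → X → ℝ} {A : Set X}
    (h : TendstoUniformlyOn F 0 atTop A) :
    PwBounded ((fun x => oc (fun n => F n x)) '' A) := by
  have hS : ∀ n : ℕ, {N | ∀ l ≥ N, ∀ x ∈ A, |F l x| ≤ (1/2:ℝ)^n}.Nonempty := by
    intro n
    have hpos : (0:ℝ) < (1/2:ℝ)^n := by positivity
    obtain ⟨N, hN⟩ := (Metric.tendstoUniformlyOn_iff.1 h _ hpos).exists_forall_of_atTop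
    exact ⟨N, fun l hl x hx => by
      have := hN l hl x hx
      rw [Pi.zero_apply, dist_comm, Real.dist_eq, sub_zero] at this
      exact this.le⟩
  refine ⟨fun n => sInf {N | ∀ l ≥ N, ∀ x ∈ A, |F l x| ≤ (1/2:ℝ)^n}, ?_⟩
  rintro α ⟨x, hx, rfl⟩ n
  have hmem := Nat.sInf_mem (hS n)
  exact oc_le fun l hl => hmem l hl x hx

/-- Bounded `oc`-image implies uniform convergence. -/
lemma unif_of_bounded {X : Type*} {F : ℕ → X → ℝ} {A : Set X} {β : ℕ → ℕ}
    (hF : ∀ x, Tendsto (fun n => F n x) atTop (nhds 0))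
    (hb : ∀ x ∈ A, ∀ n, oc (fun k => F k x) n ≤ β n) :
    TendstoUniformlyOn F 0 atTop A := by
  rw [Metric.tendstoUniformlyOn_iff]
  intro ε hε
  obtain ⟨n, hn⟩ := exists_pow_lt_of_lt_one hε (by norm_num : (1/2:ℝ) < 1)
  filter_upwards [eventually_ge_atTop (β n)] with l hl x hx
  have h1 : |F l x| ≤ (1/2:ℝ)^n :=
    oc_spec (hF x) n l (le_trans (hb x hx n) hl)
  rw [Pi.zero_apply, dist_comm, Real.dist_eq, sub_zero]
  exact lt_of_le_of_lt h1 hn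

/-- For an upward continuous outer measure `μ*` and a pointwise
vanishing sequence `F`, `GES(X, μ*, F)` holds iff there is `Y ⊆ X` of full outer
measure with `oc F [Y] ∈ K_σ`. -/
theorem stmt5 {X : Type*} (μ : OuterMeasure X) (hμ : UpCont μ)
    (F : ℕ → X → ℝ) (hF : ∀ x, Tendsto (fun n => F n x) atTop (nhds 0)) :
    GESF μ F ↔
      ∃ Y : Set X, μ Y = μ Set.univ ∧
        (fun x => oc (fun n => F n x)) '' Y ∈ Ksigma := by
  constructor
  · intro hG
    by_cases h0 : μ Set.univ = 0
    · refine ⟨∅, by simp [h0], ⟨fun _ => ∅, fun _ => ⟨fun _ => 0, by simp⟩, by simp⟩⟩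
    · have hpos : 0 < μ Set.univ := pos_iff_ne_zero.2 h0
      have hne : (Iio (μ Set.univ)).Nonempty := ⟨0, hpos⟩
      have : NeBot (nhdsWithin (μ Set.univ) (Iio (μ Set.univ))) := nhdsWithin_Iio_self_neBot' hne
      obtain ⟨M, hM⟩ := exists_seq_tendsto (nhdsWithin (μ Set.univ) (Iio (μ Set.univ)))
      rw [tendsto_nhdsWithin_iff] at hM
      obtain ⟨N, hN⟩ := hM.2.exists_forall_of_atTop
      have hMlt : ∀ n, M (n + N) < μ Set.univ := fun n => hN _ (Nat.le_add_left _ _)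
      choose A hA hAu using fun n => hG (M (n + N)) (hMlt n)
      refine ⟨⋃ n, A n, ?_, ?_⟩
      · refine le_antisymm (μ.mono (subset_univ _)) ?_
        by_contra hlt
        push_neg at hlt
        have h2 : Tendsto (fun n => M (n + N)) atTop (nhds (μ Set.univ)) :=
          hM.1.comp (tendsto_add_atTop_nat N)
        obtain ⟨n, hn⟩ := ((tendsto_order.1 h2).1 _ hlt).exists
        exact absurd (lt_trans hn (hA n)) (not_lt.2 (μ.mono (subset_iUnion A n)))
      · refine ⟨fun n => (fun x => oc (fun k => F k x)) '' A n,
          fun n => pwBounded_of_unif (hAu n), ?_⟩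
        rw [image_iUnion]
  · rintro ⟨Y, hY, B, hB, hsub⟩ M hM
    choose β hβ using hB
    set C : ℕ → Set X := fun n => {x ∈ Y | oc (fun k => F k x) ∈ B n} with hC
    have hYC : (⋃ n, C n) = Y := by
      apply Subset.antisymm (iUnion_subset fun n x hx => hx.1)
      intro x hx
      obtain ⟨_, ⟨n, rfl⟩, hxB⟩ := hsub ⟨x, hx, rfl⟩
      exact mem_iUnion.2 ⟨n, hx, hxB⟩
    have htend := hμ C
    rw [hYC, hY] at htend
    obtain ⟨n, hn⟩ := ((tendsto_order.1 htend).1 M hM).exists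
    refine ⟨⋃ k < n, C k, hn, ?_⟩
    refine unif_of_bounded hF (β := fun i => (Finset.range n).sup fun k => β k i) ?_
    intro x hx i
    obtain ⟨k, hk, hxk⟩ := mem_iUnion₂.1 hx
    exact le_trans (hβ k _ hxk.2 i)
      (Finset.le_sup (f := fun k => β k i) (Finset.mem_range.2 hk))
end

section
/- Let μ* be an upward continuous outer measure on a set X. Then GES(X, μ*) holds if and only if for every function φ : X → (ℕ → ℕ) there is a subset Y ⊆ X of full outer measure (μ*(Y) = μ*(X)) such that φ[Y] ∈ K_σ. -/
open MeasureTheory Filter Set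
open scoped ENNReal

/-- `GES(X, μ*)`: `GES(X, μ*, F)` for every sequence `F` of real-valued functions on `X`
converging pointwise to `0`. -/
def GES {X : Type*} (μ : OuterMeasure X) : Prop :=
  ∀ F : ℕ → X → ℝ, (∀ x, Tendsto (fun n => F n x) atTop (nhds 0)) → GESF μ F

/-!
If `Fₙ → 0` pointwise, let `φ x k` be a modulus of convergence of `(Fₙ x)ₙ` at precision
`1/(k+1)`. Then `F` converges uniformly on every set whose `φ`-image is `≤`-bounded, and if
`φ[Y] ∈ K_σ`, upward continuity yields such subsets of `Y` of outer measure arbitrarily close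
to `μ*(Y)`.

Conversely, given `φ`, put `Fₙ x = 2^{-e}`, where `e` is the first index `k < n` with
`φ x k > n`, or `n` if there is none. Then `Fₙ → 0` pointwise, and uniform convergence of `F` on
`A` bounds `φ[A]`, since `Fₙ x < 2^{-(m+1)}` forces `φ x m ≤ n`. A countable union of such sets
of outer measures approaching `μ*(X)` is the required `Y`.
-/

theorem PwBounded.mono {B B' : Set (ℕ → ℕ)} (h : PwBounded B') (hB : B ⊆ B') : PwBounded B :=
  let ⟨β, hβ⟩ := h
  ⟨β, fun α hα => hβ α (hB hα)⟩

theorem pwBounded_biUnion_lt {B : ℕ → Set (ℕ → ℕ)} (hB : ∀ k, PwBounded (B k)) (n : ℕ) :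
    PwBounded (⋃ k < n, B k) := by
  choose β hβ using hB
  refine ⟨fun m => (Finset.range n).sup (β · m), fun α hα m => ?_⟩
  simp only [mem_iUnion] at hα
  obtain ⟨k, hk, hαk⟩ := hα
  exact (hβ k α hαk m).trans (Finset.le_sup (f := (β · m)) (Finset.mem_range.2 hk))

def escapeIndex (α : ℕ → ℕ) (n : ℕ) : ℕ :=
  Nat.find (⟨n, Or.inl le_rfl⟩ : ∃ k, n ≤ k ∨ n < α k)

theorem le_escapeIndex_iff {α : ℕ → ℕ} {m n : ℕ} :
    m ≤ escapeIndex α n ↔ ∀ i < m, i < n ∧ α i ≤ n := by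
  simp only [escapeIndex, Nat.le_find_iff, not_or, not_le, not_lt]

theorem tendsto_escapeIndex (α : ℕ → ℕ) : Tendsto (escapeIndex α) atTop atTop := by
  refine tendsto_atTop.2 fun m => ?_
  filter_upwards [eventually_ge_atTop (max m ((Finset.range m).sup α))] with n hn
  refine le_escapeIndex_iff.2 fun i hi => ⟨by omega, ?_⟩
  exact (Finset.le_sup (Finset.mem_range.2 hi)).trans (le_of_max_le_right hn)

section

variable {X : Type*}

noncomputable def escapeWeight (φ : X → ℕ → ℕ) (n : ℕ) (x : X) : ℝ :=
  (1 / 2 : ℝ) ^ escapeIndex (φ x) n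

theorem tendsto_escapeWeight (φ : X → ℕ → ℕ) (x : X) :
    Tendsto (fun n => escapeWeight φ n x) atTop (nhds 0) :=
  (tendsto_pow_atTop_nhds_zero_of_lt_one (by norm_num) (by norm_num)).comp
    (tendsto_escapeIndex (φ x))

theorem pwBounded_image_of_tendstoUniformlyOn_escapeWeight {φ : X → ℕ → ℕ} {A : Set X}
    (h : TendstoUniformlyOn (escapeWeight φ) 0 atTop A) : PwBounded (φ '' A) := by
  suffices ∀ m, ∃ n, ∀ x ∈ A, φ x m ≤ n by
    choose β hβ using this
    refine ⟨β, ?_⟩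
    rintro _ ⟨x, hx, rfl⟩ m
    exact hβ m x hx
  intro m
  obtain ⟨n, hn⟩ := (Metric.tendstoUniformlyOn_iff.1 h ((1 / 2) ^ (m + 1)) (by positivity)).exists
  refine ⟨n, fun x hx => ?_⟩
  have hsmall : escapeWeight φ n x < (1 / 2) ^ (m + 1) := by
    simpa [escapeWeight, abs_of_nonneg] using hn x hx
  have hm : m + 1 ≤ escapeIndex (φ x) n :=
    ((pow_lt_pow_iff_right_of_lt_one₀ (by norm_num) (by norm_num)).1 hsmall).le
  exact (le_escapeIndex_iff.1 hm m m.lt_succ_self).2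

theorem MeasureTheory.OuterMeasure.exists_iUnion_eq_univ_of_forall_lt (μ : OuterMeasure X)
    {P : Set X → Prop} (hP : P ∅) (h : ∀ M < μ univ, ∃ A, M < μ A ∧ P A) :
    ∃ A : ℕ → Set X, (∀ j, P (A j)) ∧ μ (⋃ j, A j) = μ univ := by
  rcases eq_zero_or_pos (μ univ) with h0 | hpos
  · exact ⟨fun _ => ∅, fun _ => hP, by simp [h0]⟩
  obtain ⟨u, -, hu_mem, hu⟩ := exists_seq_strictMono_tendsto' hpos
  choose A hAu hPA using fun j => h (u j) (hu_mem j).2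
  refine ⟨A, hPA, le_antisymm (μ.mono (subset_univ _)) (le_of_tendsto' hu fun j => ?_)⟩
  exact (hAu j).le.trans (μ.mono (subset_iUnion A j))

theorem UpCont.exists_pwBounded_image {μ : OuterMeasure X} (hμ : UpCont μ) {φ : X → ℕ → ℕ}
    {Y : Set X} (hY : φ '' Y ∈ Ksigma) {M : ℝ≥0∞} (hM : M < μ Y) :
    ∃ A ⊆ Y, M < μ A ∧ PwBounded (φ '' A) := by
  obtain ⟨B, hB, hYB⟩ := hY
  have hcover : ⋃ k, Y ∩ φ ⁻¹' B k = Y := by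
    refine (iUnion_subset fun k => inter_subset_left).antisymm fun x hx => ?_
    obtain ⟨k, hk⟩ := mem_iUnion.1 (hYB (mem_image_of_mem φ hx))
    exact mem_iUnion.2 ⟨k, hx, hk⟩
  have hlim := hμ fun k => Y ∩ φ ⁻¹' B k
  rw [hcover] at hlim
  obtain ⟨n, hn⟩ := (hlim.eventually (eventually_gt_nhds hM)).exists
  refine ⟨_, iUnion₂_subset fun k _ => inter_subset_left, hn, ?_⟩
  refine (pwBounded_biUnion_lt hB n).mono ?_
  simp only [image_iUnion₂, iUnion₂_subset_iff]
  exact fun k hk => (image_subset_iff.2 inter_subset_right).trans (subset_biUnion_of_mem hk)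

theorem tendstoUniformlyOn_of_pwBounded_image {E : Type*} [PseudoMetricSpace E]
    {F : ℕ → X → E} {f : X → E} {φ : X → ℕ → ℕ}
    (hφ : ∀ x k n, φ x k ≤ n → dist (F n x) (f x) < 1 / (k + 1)) {A : Set X}
    (hA : PwBounded (φ '' A)) : TendstoUniformlyOn F f atTop A := by
  obtain ⟨β, hβ⟩ := hA
  refine Metric.tendstoUniformlyOn_iff.2 fun ε hε => ?_
  obtain ⟨k, hk⟩ := exists_nat_one_div_lt hε
  filter_upwards [eventually_ge_atTop (β k)] with n hn x hx
  rw [dist_comm]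
  exact (hφ x k n ((hβ _ (mem_image_of_mem φ hx) k).trans hn)).trans hk

end

/-- For an upward continuous outer measure `μ*` on `X`, `GES(X, μ*)`
holds iff every `φ : X → (ℕ → ℕ)` maps some set `Y` of full outer measure into `K_σ`. -/
theorem stmt6 {X : Type*} (μ : OuterMeasure X) (hμ : UpCont μ) :
    GES μ ↔
      ∀ φ : X → ℕ → ℕ, ∃ Y : Set X, μ Y = μ Set.univ ∧ φ '' Y ∈ Ksigma := by
  constructor
  · intro hG φ
    obtain ⟨A, hA, hAY⟩ := μ.exists_iUnion_eq_univ_of_forall_lt tendstoUniformlyOn_empty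
      (hG _ (tendsto_escapeWeight φ))
    refine ⟨⋃ j, A j, hAY, fun j => φ '' A j, ?_, (image_iUnion).subset⟩
    exact fun j => pwBounded_image_of_tendstoUniformlyOn_escapeWeight (hA j)
  · intro h F hF M hM
    choose φ hφ using fun x (k : ℕ) =>
      Metric.tendsto_atTop.1 (hF x) (1 / (k + 1)) Nat.one_div_pos_of_nat
    obtain ⟨Y, hY, hYK⟩ := h φ
    obtain ⟨A, -, hMA, hA⟩ := hμ.exists_pwBounded_image hYK (hY ▸ hM)
    exact ⟨A, hMA, tendstoUniformlyOn_of_pwBounded_image hφ hA⟩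
end

section
/- If 𝔬 < 𝔟, then GES holds: for every sequence ⟨f_n⟩ of functions [0,1] → ℝ converging pointwise to 0 and every η > 0 there is a subset A ⊆ [0,1] with Lebesgue outer measure μ*(A) > 1 − η on which ⟨f_n⟩ converges uniformly. -/
open MeasureTheory Filter Set

/-- Eventual domination: `α ≤* β` iff `α n ≤ β n` for all but finitely many `n`. -/
def EvDom (α β : ℕ → ℕ) : Prop := ∀ᶠ n in atTop, α n ≤ β n

/-- The bounding number `𝔟`: the least cardinality of a family of sequences unbounded
in the eventual-domination order. -/
noncomputable def bNum : Cardinal :=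
  sInf {c | ∃ S : Set (ℕ → ℕ), ¬ (∃ β, ∀ α ∈ S, EvDom α β) ∧ Cardinal.mk S = c}

/-- `𝔬`: the least cardinality of a subset of `[0,1]` of full Lebesgue outer measure. -/
noncomputable def oNum : Cardinal :=
  sInf {c | ∃ Y : Set ℝ, Y ⊆ Set.Icc 0 1 ∧ volume Y = 1 ∧ Cardinal.mk Y = c}

/-- If `𝔬 < 𝔟` then `GES` holds: every pointwise vanishing sequence of
functions `[0,1] → ℝ` converges uniformly on a set of outer measure `> 1 - η`, for
every `η > 0`. -/
theorem stmt9 (h : oNum < bNum) :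
    ∀ f : ℕ → ℝ → ℝ,
      (∀ x ∈ Set.Icc (0:ℝ) 1, Tendsto (fun n => f n x) atTop (nhds 0)) →
      ∀ η : ℝ, 0 < η →
        ∃ A ⊆ Set.Icc (0:ℝ) 1,
          ENNReal.ofReal (1 - η) < volume A ∧ TendstoUniformlyOn f 0 atTop A := by
  intro f hf η hη
  -- obtain a witness Y for oNum
  have hmem : oNum ∈ {c | ∃ Y : Set ℝ, Y ⊆ Set.Icc 0 1 ∧ volume Y = 1 ∧ Cardinal.mk Y = c} := by
    apply csInf_mem
    exact ⟨Cardinal.mk (Set.Icc (0:ℝ) 1), Set.Icc 0 1, le_refl _, by simp, rfl⟩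
  obtain ⟨Y, hY1, hY2, hY3⟩ := hmem
  -- choose moduli of convergence
  have key : ∀ (y : ℝ) (k : ℕ), ∃ N, y ∈ Y → ∀ n ≥ N, |f n y| < 1/(k+1) := by
    intro y k
    by_cases hy : y ∈ Y
    · have := hf y (hY1 hy)
      rw [Metric.tendsto_atTop] at this
      obtain ⟨N, hN⟩ := this (1/(k+1)) (by positivity)
      exact ⟨N, fun _ n hn => by simpa [Real.dist_eq] using hN n hn⟩
    · exact ⟨0, fun hy' => absurd hy' hy⟩
  choose α hα using key
  -- bound the family by some β
  have hb : ∃ β, ∀ g ∈ α '' Y, EvDom g β := by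
    by_contra hc
    have h1 : bNum ≤ Cardinal.mk (α '' Y) := csInf_le' ⟨α '' Y, hc, rfl⟩
    have h2 : Cardinal.mk (α '' Y) ≤ Cardinal.mk Y := Cardinal.mk_image_le
    rw [hY3] at h2
    exact absurd h (not_lt.mpr (h1.trans h2))
  obtain ⟨β, hβ⟩ := hb
  -- increasing family
  set A : ℕ → Set ℝ := fun m => {y ∈ Y | ∀ k ≥ m, α y k ≤ β k} with hA
  have hmono : Monotone A := by
    intro m m' hmm y hy
    exact ⟨hy.1, fun k hk => hy.2 k (hmm.trans hk)⟩
  have hunion : (⋃ m, A m) = Y := by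
    apply Set.Subset.antisymm
    · exact Set.iUnion_subset fun m y hy => hy.1
    · intro y hy
      have := hβ (α y) ⟨y, hy, rfl⟩
      rw [EvDom, eventually_atTop] at this
      obtain ⟨m, hm⟩ := this
      exact Set.mem_iUnion.mpr ⟨m, hy, hm⟩
  have hsup : (⨆ m, volume (A m)) = 1 := by
    rw [← (hmono.directed_le).measure_iUnion, hunion, hY2]
  have hlt : ENNReal.ofReal (1 - η) < ⨆ m, volume (A m) := by
    rw [hsup]
    exact ENNReal.ofReal_lt_one.mpr (by linarith)
  obtain ⟨m, hm⟩ := lt_iSup_iff.mp hlt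
  refine ⟨A m, fun y hy => hY1 hy.1, hm, ?_⟩
  rw [Metric.tendstoUniformlyOn_iff]
  intro ε hε
  obtain ⟨j, hj⟩ := exists_nat_one_div_lt hε
  set k := max j m with hk
  have hkε : 1/((k:ℝ)+1) < ε := by
    refine lt_of_le_of_lt ?_ hj
    have : (j:ℝ) + 1 ≤ (k:ℝ) + 1 := by
      have : (j:ℕ) ≤ k := le_max_left _ _
      exact_mod_cast Nat.succ_le_succ this
    apply one_div_le_one_div_of_le (by positivity) this
  rw [eventually_atTop]
  refine ⟨β k, fun n hn x hx => ?_⟩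
  have hαx : α x k ≤ β k := hx.2 k (le_max_right _ _)
  have := hα x k hx.1 n (hαx.trans hn)
  simpa [Real.dist_eq, abs_sub_comm] using this.trans hkε
end

section
/- If 𝔬 = 𝔡 = 𝔠, then GES fails: there exist a sequence ⟨f_n⟩ of functions [0,1] → ℝ converging pointwise to 0 and an η > 0 such that every subset A ⊆ [0,1] on which ⟨f_n⟩ converges uniformly has Lebesgue outer measure μ*(A) ≤ 1 − η. -/
/-!
Index by the reals a family `α_x` in `ℕ → ℕ` whose `≤*`-bounded subfamilies all have fewer
than `𝔡` members: well-order a dominating family of size `𝔡 = 𝔠` in order type `𝔡` and let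
`α_x` escape its first `x` members. Put `f_n(x) = 1/(k+1)` for the least `k` with
`α_x(k) + k > n`. Then `f_n(x) → 0` for every `x`, while uniform convergence on `A` bounds every
`α_x` with `x ∈ A` by a single function, so `|A| < 𝔡 = 𝔬`. A set of size `< 𝔬` is null:
otherwise, by Steinhaus' theorem (via Lebesgue density), its rational translates meet `[0,1]`
in a set of full outer measure and of the same size.
-/

open MeasureTheory Filter Set

/-- The dominating number `𝔡`: the least cardinality of a cofinal subset of
`(ℕ → ℕ, ≤*)`. -/
noncomputable def dNum : Cardinal :=
  sInf {c | ∃ S : Set (ℕ → ℕ), (∀ α, ∃ β ∈ S, EvDom α β) ∧ Cardinal.mk S = c}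

open Metric Topology Pointwise

theorem EvDom.trans {α β γ : ℕ → ℕ} (h₁ : EvDom α β) (h₂ : EvDom β γ) : EvDom α γ :=
  (h₁.and h₂).mono fun _ h => h.1.trans h.2

theorem exists_dominating_mk_eq_dNum :
    ∃ D : Set (ℕ → ℕ), (∀ α, ∃ β ∈ D, EvDom α β) ∧ Cardinal.mk D = dNum :=
  csInf_mem (s := {c | ∃ S : Set (ℕ → ℕ), (∀ α, ∃ β ∈ S, EvDom α β) ∧ Cardinal.mk S = c})
    ⟨_, univ, fun α => ⟨α, mem_univ α, Eventually.of_forall fun _ => le_rfl⟩, rfl⟩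

theorem exists_not_evDom_of_mk_lt_dNum {S : Set (ℕ → ℕ)} (hS : Cardinal.mk S < dNum) :
    ∃ α, ∀ β ∈ S, ¬EvDom α β := by
  by_contra! h
  have : dNum ≤ Cardinal.mk S := csInf_le' ⟨S, h, rfl⟩
  exact this.not_gt hS

theorem aleph0_le_dNum : Cardinal.aleph0 ≤ dNum := by
  by_contra! h
  obtain ⟨D, hD, hDcard⟩ := exists_dominating_mk_eq_dNum
  have hfin : D.Finite := Cardinal.lt_aleph0_iff_set_finite.mp (hDcard ▸ h)
  obtain ⟨β, hβD, hβ⟩ := hD fun n => ∑ γ ∈ hfin.toFinset, γ n + 1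
  obtain ⟨n, hn : ∑ γ ∈ hfin.toFinset, γ n + 1 ≤ β n⟩ := hβ.exists
  have : β n ≤ ∑ γ ∈ hfin.toFinset, γ n :=
    Finset.single_le_sum (f := fun γ : ℕ → ℕ => γ n) (fun _ _ => Nat.zero_le _)
      (hfin.mem_toFinset.mpr hβD)
  omega

theorem exists_family_mk_setOf_evDom_lt_dNum (X : Type) (hX : Cardinal.mk X = dNum) :
    ∃ α : X → ℕ → ℕ, ∀ g, Cardinal.mk {x | EvDom (α x) g} < dNum := by
  obtain ⟨D, hD, hDcard⟩ := exists_dominating_mk_eq_dNum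
  obtain ⟨d⟩ : Nonempty (X ≃ D) := Cardinal.eq.mp (hX.trans hDcard.symm)
  obtain ⟨_, _, hord⟩ := Cardinal.exists_ord_eq_type_lt X
  have hsmall (x : X) : Cardinal.mk ((fun y => (d y : ℕ → ℕ)) '' Iic x) < dNum :=
    Cardinal.mk_image_le.trans_lt <| hX ▸ Cardinal.mk_Iic_lt x hord (hX ▸ aleph0_le_dNum)
  choose α hα using fun x => exists_not_evDom_of_mk_lt_dNum (hsmall x)
  refine ⟨α, fun g => ?_⟩
  obtain ⟨β, hβD, hgβ⟩ := hD g
  set y := d.symm ⟨β, hβD⟩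
  have hgy : EvDom g (d y) := by simpa [y] using hgβ
  have hsub : {x | EvDom (α x) g} ⊆ Iio y := fun x hx =>
    lt_of_not_ge fun hyx => hα x _ ⟨y, hyx, rfl⟩ (hx.trans hgy)
  exact (Cardinal.mk_le_mk_of_subset hsub).trans_lt (hX ▸ Cardinal.mk_Iio_lt y hord)

theorem exists_mem_eventually_lt_volume_inter_closedBall {s : Set ℝ} (hs : volume s ≠ 0)
    {c : ENNReal} (hc : c < 1) :
    ∃ x ∈ s, ∀ᶠ r in 𝓝[>] 0, c * volume (closedBall x r) < volume (s ∩ closedBall x r) := by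
  obtain ⟨x, hxs, hx⟩ := Measure.exists_mem_of_measure_ne_zero_of_ae hs
    (Besicovitch.ae_tendsto_measure_inter_div volume s)
  refine ⟨x, hxs, ?_⟩
  filter_upwards [hx.eventually (eventually_gt_nhds hc), self_mem_nhdsWithin] with r hr hr0
  exact (ENNReal.lt_div_iff_mul_lt (.inl (measure_closedBall_pos _ _ hr0).ne')
    (.inl measure_closedBall_lt_top.ne)).1 hr

theorem interior_sub_nonempty {S W : Set ℝ} (hS : volume S ≠ 0) (hW : MeasurableSet W)
    (hW0 : volume W ≠ 0) : (interior (W - S)).Nonempty := by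
  have hc : ENNReal.ofReal (7 / 8) < 1 := by norm_num
  obtain ⟨x, -, hx⟩ := exists_mem_eventually_lt_volume_inter_closedBall hS hc
  obtain ⟨y, -, hy⟩ := exists_mem_eventually_lt_volume_inter_closedBall hW0 hc
  obtain ⟨r, hSr, hWr, hr0 : 0 < r⟩ := (hx.and (hy.and self_mem_nhdsWithin)).exists
  suffices ball (y - x) (r / 2) ⊆ W - S from
    ⟨y - x, mem_interior_iff_mem_nhds.2 (mem_of_superset (ball_mem_nhds _ (by positivity)) this)⟩
  intro t ht
  by_contra hWS
  -- then `W ∩ B(y, r)` and `t + (S ∩ B(x, r))` are disjoint pieces of `B(y, 3r/2)`, each of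
  -- measure `> 7/8 · 2r`, which is too much
  have hdisj : Disjoint (W ∩ closedBall y r) (t +ᵥ (S ∩ closedBall x r)) := by
    rw [Set.disjoint_left]
    rintro _ ⟨hw, -⟩ ⟨s, ⟨hs, -⟩, rfl⟩
    exact hWS ⟨_, hw, s, hs, by simp⟩
  have hsub : W ∩ closedBall y r ∪ (t +ᵥ (S ∩ closedBall x r)) ⊆ closedBall y (3 / 2 * r) := by
    rintro _ (⟨-, hw⟩ | ⟨s, ⟨-, hs⟩, rfl⟩)
    · exact closedBall_subset_closedBall (by linarith) hw
    · rw [mem_closedBall, Real.dist_eq] at hs ⊢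
      rw [mem_ball, Real.dist_eq] at ht
      change |t + s - y| ≤ 3 / 2 * r
      calc |t + s - y| ≤ |s - x| + |t - (y - x)| := by
            rw [show t + s - y = (s - x) + (t - (y - x)) by ring]; exact abs_add_le _ _
        _ ≤ 3 / 2 * r := by linarith
  have hle := measure_mono (μ := volume) hsub
  rw [measure_union' hdisj (hW.inter measurableSet_closedBall), measure_vadd] at hle
  have hlt := (ENNReal.add_lt_add hWr hSr).trans_le hle
  simp only [Real.volume_closedBall, ← ENNReal.ofReal_mul (by norm_num : (0:ℝ) ≤ 7 / 8)] at hlt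
  rw [← ENNReal.ofReal_add (by positivity) (by positivity),
    ENNReal.ofReal_lt_ofReal_iff (by positivity)] at hlt
  linarith

theorem volume_iUnion_rat_vadd_inter {A U : Set ℝ} (hA : volume A ≠ 0) (hU : MeasurableSet U) :
    volume ((⋃ q : ℚ, (q : ℝ) +ᵥ A) ∩ U) = volume U := by
  set H := toMeasurable volume (⋃ q : ℚ, (q : ℝ) +ᵥ A)
  have hnull : volume (U \ H) = 0 := by
    by_contra hW0
    obtain ⟨q, hq⟩ := Rat.denseRange_cast.exists_mem_open isOpen_interior
      (interior_sub_nonempty hA (hU.diff (measurableSet_toMeasurable _ _)) hW0)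
    obtain ⟨w, hw, a, ha, hwa⟩ := interior_subset hq
    refine hw.2 (subset_toMeasurable _ _ (mem_iUnion.2 ⟨q, a, ha, ?_⟩))
    simp only [vadd_eq_add, ← hwa, sub_add_cancel]
  rw [← Measure.measure_toMeasurable_inter_of_sFinite hU, inter_comm, measure_inter_conull' hnull]

theorem mk_iUnion_rat_vadd {A : Set ℝ} (hA : Cardinal.aleph0 ≤ Cardinal.mk A) :
    Cardinal.mk (⋃ q : ℚ, (q : ℝ) +ᵥ A) ≤ Cardinal.mk A :=
  (Cardinal.mk_iUnion_le _).trans <| by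
    simp [Cardinal.mk_vadd_set, Cardinal.aleph0_mul_eq hA]

theorem volume_eq_zero_of_mk_lt_oNum {A : Set ℝ} (hA : Cardinal.mk A < oNum) : volume A = 0 := by
  by_cases hcount : A.Countable
  · exact hcount.measure_zero _
  by_contra hA0
  have hfull : volume ((⋃ q : ℚ, (q : ℝ) +ᵥ A) ∩ Icc 0 1) = 1 := by
    rw [volume_iUnion_rat_vadd_inter hA0 measurableSet_Icc, Real.volume_Icc, sub_zero,
      ENNReal.ofReal_one]
  have hle : oNum ≤ Cardinal.mk ((⋃ q : ℚ, (q : ℝ) +ᵥ A) ∩ Icc 0 1 : Set ℝ) :=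
    csInf_le' ⟨_, inter_subset_right, hfull, rfl⟩
  have hinf : Cardinal.aleph0 ≤ Cardinal.mk A :=
    (lt_of_not_ge (Cardinal.le_aleph0_iff_set_countable.not.2 hcount)).le
  exact (hle.trans ((Cardinal.mk_le_mk_of_subset inter_subset_left).trans
    (mk_iUnion_rat_vadd hinf))).not_gt hA

def firstExceed (α : ℕ → ℕ) (n : ℕ) : ℕ :=
  Nat.find (⟨n + 1, by omega⟩ : ∃ k, n < α k + k)

theorem le_of_lt_firstExceed {α : ℕ → ℕ} {n k : ℕ} (h : k < firstExceed α n) : α k ≤ n := by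
  have := Nat.find_min _ h
  omega

theorem tendsto_firstExceed (α : ℕ → ℕ) : Tendsto (firstExceed α) atTop atTop := by
  refine tendsto_atTop.2 fun K => ?_
  filter_upwards [(Finset.range K).eventually_all.2 fun k _ => eventually_ge_atTop (α k + k)]
    with n hn
  exact (Nat.le_find_iff _ _).2 fun m hm => by have := hn m (Finset.mem_range.2 hm); omega

noncomputable def escapeSeq {X : Type*} (α : X → ℕ → ℕ) (n : ℕ) (x : X) : ℝ :=
  1 / (firstExceed (α x) n + 1)

theorem tendsto_escapeSeq {X : Type*} (α : X → ℕ → ℕ) (x : X) :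
    Tendsto (fun n => escapeSeq α n x) atTop (𝓝 0) :=
  tendsto_one_div_add_atTop_nhds_zero_nat.comp (tendsto_firstExceed (α x))

theorem exists_forall_le_of_tendstoUniformlyOn_escapeSeq {X : Type*} {α : X → ℕ → ℕ} {A : Set X}
    (h : TendstoUniformlyOn (escapeSeq α) 0 atTop A) :
    ∃ g : ℕ → ℕ, ∀ x ∈ A, ∀ k, α x k ≤ g k := by
  have (k : ℕ) : ∃ N, ∀ x ∈ A, α x k ≤ N := by
    obtain ⟨N, hN⟩ :=
      (Metric.tendstoUniformlyOn_iff.1 h _ (Nat.one_div_pos_of_nat (n := k))).exists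
    refine ⟨N, fun x hx => le_of_lt_firstExceed ?_⟩
    have hlt := hN x hx
    rw [Pi.zero_apply, dist_zero_left, Real.norm_of_nonneg (by unfold escapeSeq; positivity),
      escapeSeq, one_div_lt_one_div (by positivity) (by positivity)] at hlt
    exact_mod_cast (add_lt_add_iff_right 1).1 hlt
  choose g hg using this
  exact ⟨g, fun x hx k => hg k x hx⟩

/-- If `𝔬 = 𝔡 = 𝔠` then `GES` fails: there are a pointwise vanishing
sequence of functions `[0,1] → ℝ` and an `η > 0` such that every set on which the
sequence converges uniformly has outer measure at most `1 - η`. -/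
theorem stmt13 (ho : oNum = dNum) (hd : dNum = Cardinal.continuum) :
    ∃ f : ℕ → ℝ → ℝ,
      (∀ x ∈ Set.Icc (0:ℝ) 1, Tendsto (fun n => f n x) atTop (nhds 0)) ∧
      ∃ η : ℝ, 0 < η ∧
        ∀ A ⊆ Set.Icc (0:ℝ) 1, TendstoUniformlyOn f 0 atTop A →
          volume A ≤ ENNReal.ofReal (1 - η) := by
  obtain ⟨α, hα⟩ := exists_family_mk_setOf_evDom_lt_dNum ℝ (Cardinal.mk_real.trans hd.symm)
  refine ⟨escapeSeq α, fun x _ => tendsto_escapeSeq α x, 1 / 2, by norm_num, fun A _ hA => ?_⟩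
  obtain ⟨g, hg⟩ := exists_forall_le_of_tendstoUniformlyOn_escapeSeq hA
  have hAg : A ⊆ {x | EvDom (α x) g} := fun x hx => Eventually.of_forall (hg x hx)
  rw [volume_eq_zero_of_mk_lt_oNum (ho ▸ (Cardinal.mk_le_mk_of_subset hAg).trans_lt (hα g))]
  exact zero_le
end

section
/- If there exists a 𝔠-Lusin set and 𝔬 = 𝔠, then GES fails: there exist a sequence ⟨f_n⟩ of functions [0,1] → ℝ converging pointwise to 0 and an η > 0 such that every subset A ⊆ [0,1] on which ⟨f_n⟩ converges uniformly has Lebesgue outer measure μ*(A) ≤ 1 − η. -/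
/-!
Let `(q k)` be dense in `ℝ` and let `f n y = (k + 1)⁻¹` for the least `k` with
`0 < |y - q k| < (n + 1)⁻¹` (and `0` if there is none). Then `f n → 0` everywhere, while uniform
convergence on `Y` gives every `q k` a punctured neighbourhood missing `Y`, so `Y` lies in the
countable set `{q k}` together with a closed set containing no `q k`: `Y` is meagre.

Compose with an injection of `ℝ` into a `𝔠`-Lusin set `L`. If GES held, for each `m` some set of
uniform convergence in `[0,1]` would have outer measure `> 1 - 1 / (m + 1)`; their union has full
outer measure, hence cardinality `≥ 𝔬 = 𝔠`, yet it is mapped injectively onto a meagre subset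
of `L`, which has cardinality `< 𝔠`.
-/

open MeasureTheory Filter Set

/-- A `κ`-Lusin set: a subset of `ℝ` of cardinality `κ` all of whose meager subsets have
cardinality less than `κ`. -/
def IsLusinSet (κ : Cardinal) (L : Set ℝ) : Prop :=
  Cardinal.mk L = κ ∧ ∀ M ⊆ L, IsMeagre M → Cardinal.mk M < κ

open Topology Metric Cardinal

section FirstHitWeight

variable {X : Type*} (U : ℕ → ℕ → Set X)

/-- Equal to `(k + 1)⁻¹` for the least `k` with `x ∈ U k n`, and to `0` if there is none. -/
noncomputable def firstHitWeight (n : ℕ) (x : X) : ℝ :=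
  ⨆ k : ℕ, (U k n).indicator (fun _ => ((k : ℝ) + 1)⁻¹) x

variable {U}

lemma firstHitWeight_nonneg (n : ℕ) (x : X) : 0 ≤ firstHitWeight U n x :=
  Real.iSup_nonneg fun _ => indicator_nonneg (fun _ _ => by positivity) _

lemma le_firstHitWeight {k n : ℕ} {x : X} (hx : x ∈ U k n) :
    ((k : ℝ) + 1)⁻¹ ≤ firstHitWeight U n x := by
  refine le_ciSup_of_le ⟨1, ?_⟩ k (by simp [hx])
  rintro _ ⟨j, rfl⟩
  classical
  dsimp only
  rw [indicator_apply]
  split_ifs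
  · exact inv_le_one_of_one_le₀ (by simp)
  · exact zero_le_one

lemma firstHitWeight_le {K n : ℕ} {x : X} (hK : ∀ k < K, x ∉ U k n) :
    firstHitWeight U n x ≤ ((K : ℝ) + 1)⁻¹ := by
  classical
  refine ciSup_le fun k => ?_
  rw [indicator_apply]
  split_ifs with hk
  · gcongr
    exact_mod_cast not_lt.1 fun hkK => hK k hkK hk
  · positivity

lemma tendsto_firstHitWeight {x : X} (hU : ∀ k, ∀ᶠ n in atTop, x ∉ U k n) :
    Tendsto (firstHitWeight U · x) atTop (𝓝 0) := by
  refine tendsto_order.2 ⟨fun a ha => .of_forall fun n =>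
    ha.trans_le (firstHitWeight_nonneg n x), fun ε hε => ?_⟩
  obtain ⟨K, hK⟩ := exists_nat_one_div_lt hε
  filter_upwards [(finite_Iio K).eventually_all.2 fun k _ => hU k] with n hn
  exact (firstHitWeight_le hn).trans_lt (by simpa using hK)

lemma exists_forall_notMem_of_tendstoUniformlyOn {Y : Set X}
    (h : TendstoUniformlyOn (firstHitWeight U) 0 atTop Y) (k : ℕ) :
    ∃ n, ∀ x ∈ Y, x ∉ U k n := by
  have hk : (0 : ℝ) < ((k : ℝ) + 1)⁻¹ := by positivity
  obtain ⟨n, hn⟩ := (Metric.tendstoUniformlyOn_iff.1 h _ hk).exists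
  refine ⟨n, fun x hx hxU => (hn x hx).not_ge ?_⟩
  rw [Pi.zero_apply, dist_zero_left, Real.norm_of_nonneg (firstHitWeight_nonneg n x)]
  exact le_firstHitWeight hxU

end FirstHitWeight

lemma Set.Countable.isMeagre {X : Type*} [TopologicalSpace X] [T1Space X]
    [∀ x : X, (𝓝[≠] x).NeBot] {s : Set X} (hs : s.Countable) : IsMeagre s := by
  rw [← biUnion_of_singleton s]
  exact isMeagre_biUnion hs fun x _ => IsNowhereDense.isMeagre <|
    isClosed_singleton.isNowhereDense_iff.2 (interior_singleton x)

section PuncturedBall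

variable {X : Type*} [MetricSpace X]

def puncturedBall (q : ℕ → X) (k n : ℕ) : Set X :=
  ball (q k) ((n : ℝ) + 1)⁻¹ \ {q k}

lemma eventually_notMem_puncturedBall (q : ℕ → X) (k : ℕ) (x : X) :
    ∀ᶠ n in atTop, x ∉ puncturedBall q k n := by
  by_cases hx : x = q k
  · exact .of_forall fun n hn => hn.2 hx
  · obtain ⟨N, hN⟩ := exists_nat_one_div_lt (dist_pos.2 hx)
    filter_upwards [eventually_ge_atTop N] with n hn hxn
    refine (mem_ball.1 hxn.1).not_ge (le_trans ?_ hN.le)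
    rw [one_div]
    gcongr

/-- `Y` lies in the union of the range of `q` and a closed set with dense complement. -/
lemma isMeagre_of_forall_exists_notMem_puncturedBall [∀ x : X, (𝓝[≠] x).NeBot] {q : ℕ → X}
    (hq : DenseRange q) {Y : Set X} (hY : ∀ k, ∃ n, ∀ x ∈ Y, x ∉ puncturedBall q k n) :
    IsMeagre Y := by
  choose r hr using hY
  set V := ⋃ k, ball (q k) ((r k : ℝ) + 1)⁻¹
  have hqV : range q ⊆ V := by
    rintro _ ⟨k, rfl⟩
    exact mem_iUnion.2 ⟨k, mem_ball_self (by positivity)⟩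
  have hV : IsClosed Vᶜ ∧ IsNowhereDense Vᶜ :=
    isClosed_isNowhereDense_iff_compl.2 ⟨by simpa using isOpen_iUnion fun k => isOpen_ball,
      by simpa using hq.mono hqV⟩
  refine ((countable_range q).isMeagre.union hV.2.isMeagre).mono fun x hx => ?_
  by_cases hxq : x ∈ range q
  · exact .inl hxq
  · refine .inr fun hxV => ?_
    obtain ⟨k, hk⟩ := mem_iUnion.1 hxV
    exact hr k x hx ⟨hk, fun h => hxq ⟨k, h.symm⟩⟩

end PuncturedBall

theorem exists_tendsto_zero_isMeagre_of_tendstoUniformlyOn (X : Type*) [MetricSpace X]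
    [TopologicalSpace.SeparableSpace X] [Nonempty X] [∀ x : X, (𝓝[≠] x).NeBot] :
    ∃ g : ℕ → X → ℝ, (∀ x, Tendsto (g · x) atTop (𝓝 0)) ∧
      ∀ Y, TendstoUniformlyOn g 0 atTop Y → IsMeagre Y := by
  set q := TopologicalSpace.denseSeq X
  exact ⟨firstHitWeight (puncturedBall q),
    fun x => tendsto_firstHitWeight fun k => eventually_notMem_puncturedBall q k x,
    fun Y hY => isMeagre_of_forall_exists_notMem_puncturedBall
      (TopologicalSpace.denseRange_denseSeq X) (exists_forall_notMem_of_tendstoUniformlyOn hY)⟩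

lemma oNum_le_mk {Y : Set ℝ} (hY : Y ⊆ Icc 0 1) (hvol : volume Y = 1) : oNum ≤ #Y :=
  csInf_le' ⟨Y, hY, hvol, rfl⟩

lemma one_le_measure_iUnion {α : Type*} [MeasurableSpace α] {μ : Measure α} {A : ℕ → Set α}
    (hA : ∀ m : ℕ, ENNReal.ofReal (1 - 1 / ((m : ℝ) + 1)) < μ (A m)) : 1 ≤ μ (⋃ m, A m) := by
  have hlim : Tendsto (fun m : ℕ => ENNReal.ofReal (1 - 1 / ((m : ℝ) + 1))) atTop (𝓝 1) := by
    simpa using ENNReal.tendsto_ofReal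
      ((tendsto_const_nhds (x := (1 : ℝ))).sub tendsto_one_div_add_atTop_nhds_zero_nat)
  exact le_of_tendsto' hlim fun m => (hA m).le.trans (measure_mono (subset_iUnion A m))

/-- If there exists a `𝔠`-Lusin set and `𝔬 = 𝔠`, then `GES` fails. -/
theorem stmt14 (hL : ∃ L : Set ℝ, IsLusinSet Cardinal.continuum L)
    (ho : oNum = Cardinal.continuum) :
    ∃ f : ℕ → ℝ → ℝ,
      (∀ x ∈ Set.Icc (0:ℝ) 1, Tendsto (fun n => f n x) atTop (nhds 0)) ∧
      ∃ η : ℝ, 0 < η ∧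
        ∀ A ⊆ Set.Icc (0:ℝ) 1, TendstoUniformlyOn f 0 atTop A →
          volume A ≤ ENNReal.ofReal (1 - η) := by
  obtain ⟨L, hLmk, hLmeagre⟩ := hL
  obtain ⟨g, hg, hgmeagre⟩ := exists_tendsto_zero_isMeagre_of_tendstoUniformlyOn ℝ
  obtain ⟨e⟩ := (Cardinal.le_def ℝ L).1 (mk_real.trans hLmk.symm).le
  set ψ : ℝ → ℝ := Subtype.val ∘ e
  have hψ : Function.Injective ψ := Subtype.val_injective.comp e.injective
  refine ⟨fun n x => g n (ψ x), fun x _ => hg (ψ x), ?_⟩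
  by_contra! H
  choose A hAI hAunif hAvol using fun m : ℕ => H (1 / ((m : ℝ) + 1)) (by positivity)
  set Y := ⋃ m, A m
  have hYI : Y ⊆ Icc 0 1 := iUnion_subset hAI
  have hvol : volume Y = 1 :=
    le_antisymm ((measure_mono hYI).trans_eq (by simp)) (one_le_measure_iUnion hAvol)
  have hmeagre : IsMeagre (ψ '' Y) := by
    rw [image_iUnion]
    exact isMeagre_iUnion fun m => hgmeagre _ fun u hu =>
      (hAunif m u hu).mono fun n hn => forall_mem_image.2 hn
  have hcard : #Y < 𝔠 := by
    rw [← mk_image_eq hψ]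
    exact hLmeagre _ (image_subset_iff.2 fun x _ => (e x).2) hmeagre
  exact (ho ▸ oNum_le_mk hYI hvol).not_gt hcard
end

section
/- If there exists a 𝔠-Lusin set and 𝔠 is a regular cardinal, then GES fails: there exist a sequence ⟨f_n⟩ of functions [0,1] → ℝ converging pointwise to 0 and an η > 0 such that every subset A ⊆ [0,1] on which ⟨f_n⟩ converges uniformly has Lebesgue outer measure μ*(A) ≤ 1 − η. -/
/-!
Sets of size `< 𝔠` are null: for a dense null Gδ set `G` (the Liouville numbers) and each
`a ∈ A`, the translations `t` with `a + t ∉ G` form a meagre set, so by regularity fewer than `𝔠`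
of them cannot cover the Lusin set `L`, and some translate of `A` lies inside `G`.

Fix a dense sequence `r` and let `φ_n(y) = 1/(k+1)`, `k` the least index with `|y - r_k| < 1/(n+1)`.
Then `φ_n → 0` off `{r_k}`, while uniform convergence on `B` keeps `B` a fixed distance away from
each `r_k`, so `B` is nowhere dense. Transport `φ_n` to `[0,1]` along an injection into
`L \ {r_k}`: a set of uniform convergence then maps onto a meagre subset of `L`, so it has size
`< 𝔠` and measure `0`.
-/

open MeasureTheory Filter Set

open Cardinal Metric Topology

universe u

theorem tendstoUniformlyOn_image_iff {ι α β γ : Type*} [UniformSpace γ] {F : ι → β → γ}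
    {f : β → γ} {p : Filter ι} {g : α → β} {s : Set α} :
    TendstoUniformlyOn F f p (g '' s) ↔ TendstoUniformlyOn (fun n => F n ∘ g) (f ∘ g) p s := by
  simp only [TendstoUniformlyOn, forall_mem_image, Function.comp]

theorem exists_mapsTo_injOn_of_mk_le {α β : Type u} [Nonempty β] {s : Set α} {t : Set β}
    (h : #s ≤ #t) : ∃ g : α → β, MapsTo g s t ∧ InjOn g s := by
  classical
  obtain ⟨e⟩ := h
  refine ⟨fun x => if hx : x ∈ s then e ⟨x, hx⟩ else Classical.arbitrary β,
    fun x hx => by simp [hx], fun x hx y hy hxy => ?_⟩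
  simp only [hx, hy, dite_true] at hxy
  simpa using e.injective (Subtype.ext hxy)

namespace IsLusinSet

variable {κ : Cardinal} {L : Set ℝ}

theorem mk_inter_lt (hL : IsLusinSet κ L) {M : Set ℝ} (hM : IsMeagre M) : #(L ∩ M : Set ℝ) < κ :=
  hL.2 _ inter_subset_left (hM.mono inter_subset_right)

theorem le_mk_diff_of_countable (hL : IsLusinSet κ L) (hκ : ℵ₀ < κ) {C : Set ℝ}
    (hC : C.Countable) : κ ≤ #(L \ C : Set ℝ) := by
  by_contra! hlt
  have hsum := mk_sdiff_add_mk (inter_subset_left : L ∩ C ⊆ L)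
  rw [sdiff_self_inter, hL.1] at hsum
  have hLC : #(L ∩ C : Set ℝ) < κ :=
    (mk_le_aleph0_iff.2 (hC.mono inter_subset_right).to_subtype).trans_lt hκ
  exact (add_lt_of_lt hκ.le hlt hLC).ne hsum

theorem exists_add_mem_of_mk_lt (hL : IsLusinSet κ L) (hκ : κ.IsRegular) {A : Set ℝ}
    (hA : #A < κ) {G : Set ℝ} (hG : G ∈ residual ℝ) : ∃ t, ∀ a ∈ A, a + t ∈ G := by
  have hbad : #(⋃ a ∈ A, L ∩ (a + ·) ⁻¹' Gᶜ : Set ℝ) < κ :=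
    (card_biUnion_lt_iff_forall_of_isRegular hκ hA).2 fun a _ => hL.mk_inter_lt <|
      IsMeagre.preimage_of_isOpenMap (continuous_const_add a) (Homeomorph.addLeft a).isOpenMap
        (by rwa [IsMeagre, compl_compl])
  obtain ⟨t, htL, ht⟩ : (L \ ⋃ a ∈ A, L ∩ (a + ·) ⁻¹' Gᶜ).Nonempty :=
    sdiff_nonempty.2 fun hsub => (mk_le_mk_of_subset hsub).not_gt (hL.1 ▸ hbad)
  refine ⟨t, fun a ha => ?_⟩
  by_contra hat
  exact ht (mem_biUnion ha ⟨htL, hat⟩)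

theorem volume_eq_zero_of_mk_lt (hL : IsLusinSet κ L) (hκ : κ.IsRegular) {A : Set ℝ}
    (hA : #A < κ) : volume A = 0 := by
  obtain ⟨t, ht⟩ := hL.exists_add_mem_of_mk_lt hκ hA eventually_residual_liouville
  refine measure_mono_null (t := (· + t) ⁻¹' {x | Liouville x}) ht ?_
  rw [measure_preimage_add_right]
  exact volume_setOfPred_liouville

end IsLusinSet

section DenseSequence

variable {X : Type*} [MetricSpace X] {r : ℕ → X}

/-- Junk value `0` when no `r k` is that close; `DenseRange r` rules this out. -/
noncomputable def firstIndexNear (r : ℕ → X) (n : ℕ) (y : X) : ℕ :=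
  sInf {k | dist y (r k) < 1 / ((n : ℝ) + 1)}

noncomputable def decayNear (r : ℕ → X) (n : ℕ) (y : X) : ℝ :=
  ((firstIndexNear r n y : ℝ) + 1)⁻¹

theorem dist_firstIndexNear_lt (hr : DenseRange r) (n : ℕ) (y : X) :
    dist y (r (firstIndexNear r n y)) < 1 / ((n : ℝ) + 1) :=
  Nat.sInf_mem (hr.exists_dist_lt y (by positivity))

theorem tendsto_firstIndexNear (hr : DenseRange r) {y : X} (hy : y ∉ range r) :
    Tendsto (fun n => firstIndexNear r n y) atTop atTop := by
  refine tendsto_atTop.2 fun K => ?_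
  have hfar : ∀ᶠ n : ℕ in atTop, ∀ k ∈ Finset.range K, 1 / ((n : ℝ) + 1) ≤ dist y (r k) :=
    (Finset.range K).eventually_all.2 fun k _ => tendsto_one_div_add_atTop_nhds_zero_nat.eventually
      (ge_mem_nhds (dist_pos.2 fun h => hy ⟨k, h.symm⟩))
  filter_upwards [hfar] with n hn
  by_contra! hlt
  exact (hn _ (Finset.mem_range.2 hlt)).not_gt (dist_firstIndexNear_lt hr n y)

theorem tendsto_decayNear (hr : DenseRange r) {y : X} (hy : y ∉ range r) :
    Tendsto (fun n => decayNear r n y) atTop (𝓝 0) :=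
  (tendsto_atTop_add_const_right _ 1
    (tendsto_natCast_atTop_atTop.comp (tendsto_firstIndexNear hr hy))).inv_tendsto_atTop

theorem isNowhereDense_iInter_compl_ball (hr : DenseRange r) {δ : ℕ → ℝ} (hδ : ∀ k, 0 < δ k) :
    IsNowhereDense (⋂ k, (ball (r k) (δ k))ᶜ) := by
  rw [(isClosed_iInter fun k => isOpen_ball.isClosed_compl).isNowhereDense_iff,
    interior_eq_empty_iff_dense_compl]
  refine hr.mono ?_
  rintro _ ⟨k, rfl⟩
  simpa using ⟨k, mem_ball_self (hδ k)⟩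

theorem isNowhereDense_of_tendstoUniformlyOn_decayNear (hr : DenseRange r) {B : Set X}
    (hB : TendstoUniformlyOn (decayNear r) 0 atTop B) : IsNowhereDense B := by
  have hfar : ∀ k : ℕ, ∃ n : ℕ, ∀ y ∈ B, 1 / ((n : ℝ) + 1) ≤ dist y (r k) := by
    intro k
    obtain ⟨n, hn⟩ := (Metric.tendstoUniformlyOn_iff.1 hB ((k : ℝ) + 1)⁻¹ (by positivity)).exists
    refine ⟨n, fun y hy => ?_⟩
    have hdecay := hn y hy
    rw [Pi.zero_apply, dist_zero_left, Real.norm_of_nonneg (by unfold decayNear; positivity),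
      decayNear, inv_lt_inv₀ (by positivity) (by positivity)] at hdecay
    have hk : k < firstIndexNear r n y := by exact_mod_cast (add_lt_add_iff_right _).1 hdecay
    exact not_lt.1 (Nat.notMem_of_lt_sInf hk)
  choose N hN using hfar
  refine (isNowhereDense_iInter_compl_ball hr (δ := fun k => 1 / ((N k : ℝ) + 1))
    fun k => by positivity).mono fun y hy => mem_iInter.2 fun k => ?_
  simpa [dist_comm] using hN k y hy

end DenseSequence

/-- If there exists a `𝔠`-Lusin set and `𝔠` is regular, then `GES`
fails. -/
theorem stmt15 (hL : ∃ L : Set ℝ, IsLusinSet Cardinal.continuum L)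
    (hreg : Cardinal.continuum.IsRegular) :
    ∃ f : ℕ → ℝ → ℝ,
      (∀ x ∈ Set.Icc (0:ℝ) 1, Tendsto (fun n => f n x) atTop (nhds 0)) ∧
      ∃ η : ℝ, 0 < η ∧
        ∀ A ⊆ Set.Icc (0:ℝ) 1, TendstoUniformlyOn f 0 atTop A →
          volume A ≤ ENNReal.ofReal (1 - η) := by
  obtain ⟨L, hL⟩ := hL
  have hreg₀ : (𝔠 : Cardinal.{0}).IsRegular := isRegular_lift_iff.1 (by rwa [lift_continuum])
  obtain ⟨r, hr⟩ := TopologicalSpace.exists_dense_seq ℝ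
  obtain ⟨g, hg_maps, hg_inj⟩ := exists_mapsTo_injOn_of_mk_le <| (mk_Icc_real zero_lt_one).trans_le
    (hL.le_mk_diff_of_countable aleph0_lt_continuum (countable_range r))
  refine ⟨fun n => decayNear r n ∘ g, fun x hx => tendsto_decayNear hr (hg_maps hx).2, 1 / 2,
    by norm_num, fun A hA hunif => ?_⟩
  have hgA : IsNowhereDense (g '' A) :=
    isNowhereDense_of_tendstoUniformlyOn_decayNear hr (tendstoUniformlyOn_image_iff.2 hunif)
  have hA_small : #A < 𝔠 := by
    rw [← mk_image_eq_of_injOn g A (hg_inj.mono hA)]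
    exact hL.2 _ ((image_mono hA).trans (hg_maps.image_subset.trans sdiff_subset)) hgA.isMeagre
  rw [hL.volume_eq_zero_of_mk_lt hreg₀ hA_small]
  exact zero_le
end

section
/- Assume the Continuum Hypothesis (𝔠 = ℵ₁). Then GES fails: there exist a sequence ⟨f_n⟩ of functions [0,1] → ℝ converging pointwise to 0 and an η > 0 such that every subset A ⊆ [0,1] on which ⟨f_n⟩ converges uniformly has Lebesgue outer measure μ*(A) ≤ 1 − η. -/
open MeasureTheory Filter Set Cardinal

/-!
Under CH, index the reals and the functions `ℕ → ℕ` tending to infinity by `ω₁`, and attach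
to the real of index `α` a function `G α → ∞` that is eventually below each of the countably
many functions of index `< α`. Put `f n x = 1 / (G x n + 1)`. On a set `A` of uniform convergence
the pointwise minimum of the `G x`, `x ∈ A`, still tends to infinity, so it has some index `ξ`;
no point of `A` can have index beyond `ξ`, hence `A` is countable and null.
-/

theorem exists_tendsto_atTop_eventually_lt {ι : Type*} [Countable ι] (u : ι → ℕ → ℕ)
    (hu : ∀ i, Tendsto (u i) atTop atTop) :
    ∃ g : ℕ → ℕ, Tendsto g atTop atTop ∧ ∀ i, ∀ᶠ n in atTop, g n < u i n := by
  rcases isEmpty_or_nonempty ι with hι | hι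
  · exact ⟨id, tendsto_id, isEmptyElim⟩
  obtain ⟨e, he⟩ := Countable.exists_injective_nat ι
  -- the index `i` can pull the infimum below level `m` only when `e i < m`: finitely many `i`
  refine ⟨fun n => ⨅ i, max (e i) (u i n - 1), tendsto_atTop.2 fun m => ?_, fun i => ?_⟩
  · have hfin : {i | e i < m}.Finite := (finite_Iio m).preimage he.injOn
    filter_upwards [(eventually_all_finite hfin).2 fun i _ => (hu i).eventually_ge_atTop (m + 1)]
      with n hn
    refine le_ciInf fun i => ?_
    by_cases hi : e i < m
    · exact le_max_of_le_right (by have := hn i hi; omega)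
    · exact le_max_of_le_left (not_lt.1 hi)
  · filter_upwards [(hu i).eventually_gt_atTop (e i)] with n hn
    exact (ciInf_le (OrderBot.bddBelow _) i).trans_lt (max_lt hn (by omega))

theorem exists_tendsto_atTop_uniformly_on_countable_only {X : Type*} [LinearOrder X]
    (hX : ∀ x : X, (Iio x).Countable) (φ : X → {h : ℕ → ℕ // Tendsto h atTop atTop})
    (hφ : Function.Surjective φ) :
    ∃ G : X → ℕ → ℕ, (∀ x, Tendsto (G x) atTop atTop) ∧
      ∀ B : Set X, (∀ m, ∀ᶠ n in atTop, ∀ x ∈ B, m ≤ G x n) → B.Countable := by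
  have hG : ∀ x : X, ∃ g : ℕ → ℕ, Tendsto g atTop atTop ∧
      ∀ y < x, ∀ᶠ n in atTop, g n < (φ y).1 n := by
    intro x
    have := (hX x).to_subtype
    obtain ⟨g, hg, hlt⟩ :=
      exists_tendsto_atTop_eventually_lt (fun y : Iio x => (φ y).1) fun y => (φ y).2
    exact ⟨g, hg, fun y hy => hlt ⟨y, hy⟩⟩
  choose G hG hGlt using hG
  refine ⟨G, hG, fun B hB => ?_⟩
  rcases B.eq_empty_or_nonempty with rfl | ⟨b, hb⟩
  · exact countable_empty
  have : Nonempty B := ⟨⟨b, hb⟩⟩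
  obtain ⟨ξ, hξ⟩ := hφ ⟨fun n => ⨅ x : B, G x n,
    tendsto_atTop.2 fun m => (hB m).mono fun n hn => le_ciInf fun x => hn x x.2⟩
  refine ((hX ξ).insert ξ).mono fun x hx => ?_
  rw [Iio_insert]
  by_contra hξx
  obtain ⟨n, hn⟩ := (hGlt x ξ (lt_of_not_ge hξx)).exists
  rw [hξ] at hn
  exact hn.not_ge (ciInf_le (OrderBot.bddBelow _) (⟨x, hx⟩ : B))

theorem exists_tendsto_atTop_uniformly_on_countable_only_of_continuum_le {α : Type}
    (hCH : continuum.{0} ≤ ℵ₁) (hα : #α ≤ ℵ₁) :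
    ∃ G : α → ℕ → ℕ, (∀ x, Tendsto (G x) atTop atTop) ∧
      ∀ A : Set α, (∀ m, ∀ᶠ n in atTop, ∀ x ∈ A, m ≤ G x n) → A.Countable := by
  let W := (ℵ₁ : Cardinal.{0}).ord.ToType
  have hW : #W = ℵ₁ := by rw [mk_toType, card_ord]
  have hIio (x : W) : (Iio x).Countable := by
    have hlt := mk_Iio_lt x (by rw [hW, Ordinal.type_toType])
    rw [hW, lt_aleph_one_iff] at hlt
    exact le_aleph0_iff_set_countable.1 hlt
  obtain ⟨emb⟩ : Nonempty ({h : ℕ → ℕ // Tendsto h atTop atTop} ↪ W) := by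
    refine le_def _ _ |>.1 (le_trans ?_ (hCH.trans_eq hW.symm))
    calc #{h : ℕ → ℕ // Tendsto h atTop atTop} ≤ #(ℕ → ℕ) := mk_subtype_le _
      _ = 𝔠 := by rw [← power_def, mk_nat, aleph0_power_aleph0]
  have : Nonempty {h : ℕ → ℕ // Tendsto h atTop atTop} := ⟨⟨id, tendsto_id⟩⟩
  obtain ⟨G, hG, hcount⟩ := exists_tendsto_atTop_uniformly_on_countable_only hIio _
    (Function.invFun_surjective emb.injective)
  obtain ⟨e⟩ : Nonempty (α ↪ W) := le_def _ _ |>.1 (hα.trans_eq hW.symm)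
  refine ⟨fun x => G (e x), fun x => hG (e x), fun A hA => ?_⟩
  refine (mapsTo_image e A).countable_of_injOn e.injective.injOn (hcount _ fun m => ?_)
  simpa only [forall_mem_image] using hA m

theorem eventually_le_of_tendstoUniformlyOn_inv {X : Type*} {G : X → ℕ → ℕ} {A : Set X}
    (h : TendstoUniformlyOn (fun n x => ((G x n : ℝ) + 1)⁻¹) 0 atTop A) (m : ℕ) :
    ∀ᶠ n in atTop, ∀ x ∈ A, m ≤ G x n := by
  have hε : (0 : ℝ) < ((m : ℝ) + 1)⁻¹ := by positivity
  filter_upwards [Metric.tendstoUniformlyOn_iff.1 h _ hε] with n hn x hx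
  have hlt := hn x hx
  rw [Pi.zero_apply, dist_zero_left, Real.norm_of_nonneg (by positivity),
    inv_lt_inv₀ (by positivity) (by positivity)] at hlt
  exact_mod_cast (lt_of_add_lt_add_right hlt).le

/-- Under the Continuum Hypothesis (`𝔠 = ℵ₁`), `GES` fails: there are a
pointwise vanishing sequence of functions `[0,1] → ℝ` and an `η > 0` such that every set
on which the sequence converges uniformly has Lebesgue outer measure at most `1 - η`. -/
theorem stmt16 (hCH : Cardinal.continuum = Cardinal.aleph 1) :
    ∃ f : ℕ → ℝ → ℝ,
      (∀ x ∈ Set.Icc (0:ℝ) 1, Tendsto (fun n => f n x) atTop (nhds 0)) ∧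
      ∃ η : ℝ, 0 < η ∧
        ∀ A ⊆ Set.Icc (0:ℝ) 1, TendstoUniformlyOn f 0 atTop A →
          volume A ≤ ENNReal.ofReal (1 - η) := by
  have hCH₀ : 𝔠 = ℵ₁ := by
    rw [← lift_continuum.{_, 0}] at hCH
    exact lift_eq_aleph_one.1 hCH
  obtain ⟨G, hG, hcount⟩ := exists_tendsto_atTop_uniformly_on_countable_only_of_continuum_le
    hCH₀.le (mk_real.trans_le hCH₀.le)
  refine ⟨fun n x => ((G x n : ℝ) + 1)⁻¹, fun x _ => ?_, 1, one_pos, fun A _ hA => ?_⟩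
  · exact (tendsto_atTop_add_const_right _ 1
      (tendsto_natCast_atTop_atTop.comp (hG x))).inv_tendsto_atTop
  · rw [(hcount A (eventually_le_of_tendstoUniformlyOn_inv hA)).measure_zero]
    exact zero_le
end
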